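/- arXiv:2212.00172 — 9 statements merged into one kernel-verified Lean document; each statement's English description precedes it below -/
import Mathlib

section
/- Isospectral reductions commute with themselves: if A = [[M,C],[D,F]] with M indexed by S, and S′ ⊆ S, then R(λ, S′, R(λ, S, A)) = R(λ, S′, A) for all λ outside the relevant spectra. -/
/-!
Split `A` into nine blocks along `(α ⊕ β) ⊕ γ`. Reducing to `α ⊕ β` turns each block `P` into
`P + Q (λ - F)⁻¹ R`. In the one-step reduction to `α`, the matrix to invert is
`λ - [[P₂₂, Q₂], [R₂, F]]`, and the Schur complement of its corner `λ - F` is exactly `λ` minus the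
reduced `β`-block. The block-inverse formula therefore expands both sides into the same six terms.
-/

open Matrix

/-- Isospectral reduction of a matrix indexed by `α ⊕ β` down to `α`. -/
noncomputable def red {α β : Type} [Fintype α] [Fintype β] [DecidableEq α] [DecidableEq β]
    (lam : ℂ) (A : Matrix (α ⊕ β) (α ⊕ β) ℂ) : Matrix α α ℂ :=
  A.toBlocks₁₁ + A.toBlocks₁₂ * (lam • (1 : Matrix β β ℂ) - A.toBlocks₂₂)⁻¹ * A.toBlocks₂₁

namespace Matrix

variable {R : Type*} {l m n : Type*}

theorem inv_fromBlocks₂₂_of_isUnit_det [CommRing R] [Fintype m] [Fintype n] [DecidableEq m]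
    [DecidableEq n] (A : Matrix m m R) (B : Matrix m n R) (C : Matrix n m R) (D : Matrix n n R)
    (hD : IsUnit D.det) (hS : IsUnit (A - B * D⁻¹ * C).det) :
    (fromBlocks A B C D)⁻¹ =
      fromBlocks (A - B * D⁻¹ * C)⁻¹ (-((A - B * D⁻¹ * C)⁻¹ * B * D⁻¹))
        (-(D⁻¹ * C * (A - B * D⁻¹ * C)⁻¹))
        (D⁻¹ + D⁻¹ * C * (A - B * D⁻¹ * C)⁻¹ * B * D⁻¹) := by
  let := invertibleOfIsUnitDet D hD
  let : Invertible (A - B * ⅟D * C) := by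
    rw [invOf_eq_nonsing_inv]; exact invertibleOfIsUnitDet _ hS
  let := fromBlocks₂₂Invertible A B C D
  rw [← invOf_eq_nonsing_inv, invOf_fromBlocks₂₂_eq]
  simp only [invOf_eq_nonsing_inv]

theorem smul_one_sub_fromBlocks [CommRing R] [DecidableEq m] [DecidableEq n] (r : R)
    (A : Matrix m m R) (B : Matrix m n R) (C : Matrix n m R) (D : Matrix n n R) :
    r • (1 : Matrix (m ⊕ n) (m ⊕ n) R) - fromBlocks A B C D =
      fromBlocks (r • 1 - A) (-B) (-C) (r • 1 - D) := by
  rw [← fromBlocks_one, fromBlocks_smul, sub_eq_add_neg, fromBlocks_neg, fromBlocks_add]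
  simp only [smul_zero, zero_sub, ← sub_eq_add_neg]

theorem submatrix_sumAssoc_symm_fromBlocks (P₁₁ : Matrix l l R) (P₁₂ : Matrix l m R)
    (P₂₁ : Matrix m l R) (P₂₂ : Matrix m m R) (Q₁ : Matrix l n R) (Q₂ : Matrix m n R)
    (R₁ : Matrix n l R) (R₂ : Matrix n m R) (F : Matrix n n R) :
    (fromBlocks (fromBlocks P₁₁ P₁₂ P₂₁ P₂₂) (fromRows Q₁ Q₂) (fromCols R₁ R₂) F).submatrix
        (Equiv.sumAssoc l m n).symm (Equiv.sumAssoc l m n).symm =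
      fromBlocks P₁₁ (fromCols P₁₂ Q₁) (fromRows P₂₁ R₁) (fromBlocks P₂₂ Q₂ R₂ F) := by
  ext (i | i | i) (j | j | j) <;> rfl

end Matrix

section IsospectralReduction

variable {α β γ : Type} [Fintype α] [Fintype β] [Fintype γ]
  [DecidableEq α] [DecidableEq β] [DecidableEq γ]

theorem red_fromBlocks (lam : ℂ) (A : Matrix α α ℂ) (B : Matrix α β ℂ) (C : Matrix β α ℂ)
    (D : Matrix β β ℂ) :
    red lam (fromBlocks A B C D) = A + B * (lam • 1 - D)⁻¹ * C := by
  simp only [red, toBlocks_fromBlocks₁₁, toBlocks_fromBlocks₁₂, toBlocks_fromBlocks₂₁,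
    toBlocks_fromBlocks₂₂]

theorem red_fromBlocks_fromRows_fromCols (lam : ℂ) (P₁₁ : Matrix α α ℂ) (P₁₂ : Matrix α β ℂ)
    (P₂₁ : Matrix β α ℂ) (P₂₂ : Matrix β β ℂ) (Q₁ : Matrix α γ ℂ) (Q₂ : Matrix β γ ℂ)
    (R₁ : Matrix γ α ℂ) (R₂ : Matrix γ β ℂ) (F : Matrix γ γ ℂ) :
    red lam (fromBlocks (fromBlocks P₁₁ P₁₂ P₂₁ P₂₂) (fromRows Q₁ Q₂) (fromCols R₁ R₂) F) =
      let G := (lam • 1 - F)⁻¹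
      fromBlocks (P₁₁ + Q₁ * G * R₁) (P₁₂ + Q₁ * G * R₂) (P₂₁ + Q₂ * G * R₁)
        (P₂₂ + Q₂ * G * R₂) := by
  rw [red_fromBlocks, fromRows_mul, fromRows_mul, mul_fromCols, mul_fromCols,
    fromRows_fromCols_eq_fromBlocks, fromBlocks_add]

theorem red_red (lam : ℂ) (A : Matrix ((α ⊕ β) ⊕ γ) ((α ⊕ β) ⊕ γ) ℂ)
    (hγ : IsUnit (lam • (1 : Matrix γ γ ℂ) - A.toBlocks₂₂).det)
    (hβ : IsUnit (lam • (1 : Matrix β β ℂ) - (red lam A).toBlocks₂₂).det) :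
    red lam (red lam A) =
      red lam (A.submatrix (Equiv.sumAssoc α β γ).symm (Equiv.sumAssoc α β γ).symm) := by
  obtain ⟨P₁₁, P₁₂, P₂₁, P₂₂, Q₁, Q₂, R₁, R₂, F, rfl⟩ : ∃ P₁₁ P₁₂ P₂₁ P₂₂ Q₁ Q₂ R₁ R₂ F,
      A = fromBlocks (fromBlocks P₁₁ P₁₂ P₂₁ P₂₂) (fromRows Q₁ Q₂) (fromCols R₁ R₂) F :=
    ⟨A.toBlocks₁₁.toBlocks₁₁, A.toBlocks₁₁.toBlocks₁₂, A.toBlocks₁₁.toBlocks₂₁,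
      A.toBlocks₁₁.toBlocks₂₂, A.toBlocks₁₂.toRows₁, A.toBlocks₁₂.toRows₂, A.toBlocks₂₁.toCols₁,
      A.toBlocks₂₁.toCols₂, A.toBlocks₂₂, by
        rw [fromBlocks_toBlocks, fromRows_toRows, fromCols_toCols, fromBlocks_toBlocks]⟩
  rw [toBlocks_fromBlocks₂₂] at hγ
  rw [red_fromBlocks_fromRows_fromCols, toBlocks_fromBlocks₂₂] at hβ
  have hSchur : lam • 1 - P₂₂ - -Q₂ * (lam • 1 - F)⁻¹ * -R₂ =
      lam • 1 - (P₂₂ + Q₂ * (lam • 1 - F)⁻¹ * R₂) := by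
    simp only [Matrix.neg_mul, Matrix.mul_neg, neg_neg, sub_sub]
  rw [red_fromBlocks_fromRows_fromCols, red_fromBlocks, submatrix_sumAssoc_symm_fromBlocks,
    red_fromBlocks, smul_one_sub_fromBlocks,
    inv_fromBlocks₂₂_of_isUnit_det _ _ _ _ hγ (hSchur ▸ hβ), hSchur, fromCols_mul_fromBlocks,
    fromCols_mul_fromRows]
  generalize (lam • (1 : Matrix γ γ ℂ) - F)⁻¹ = G
  generalize (lam • 1 - (P₂₂ + Q₂ * G * R₂))⁻¹ = T
  simp only [Matrix.add_mul, Matrix.mul_add, Matrix.mul_neg, Matrix.neg_mul, neg_neg,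
    Matrix.mul_assoc]
  abel

end IsospectralReduction

theorem stmt_1_general (a b c : ℕ)
    (A : Matrix ((Fin a ⊕ Fin b) ⊕ Fin c) ((Fin a ⊕ Fin b) ⊕ Fin c) ℂ)
    (lam : ℂ)
    -- `λ` is outside the spectrum of the `c`-block (needed for the reduction to `S`),
    (h1 : IsUnit (lam • (1 : Matrix (Fin c) (Fin c) ℂ) - A.toBlocks₂₂).det)
    -- and outside the "spectrum" of the `b`-block of the reduced matrix.
    (h3 : IsUnit (lam • (1 : Matrix (Fin b) (Fin b) ℂ) - (red lam A).toBlocks₂₂).det) :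
    red lam (red lam A) =
      red lam (A.submatrix (Equiv.sumAssoc (Fin a) (Fin b) (Fin c)).symm
        (Equiv.sumAssoc (Fin a) (Fin b) (Fin c)).symm) :=
  red_red lam A h1 h3

theorem stmt_1 (a b c : ℕ)
    (A : Matrix ((Fin a ⊕ Fin b) ⊕ Fin c) ((Fin a ⊕ Fin b) ⊕ Fin c) ℂ)
    (lam : ℂ)
    -- `λ` is outside the spectrum of the `c`-block (needed for the reduction to `S`),
    (h1 : IsUnit (lam • (1 : Matrix (Fin c) (Fin c) ℂ) - A.toBlocks₂₂).det)
    -- outside the spectrum of the `(b ⊕ c)`-block (needed for the reduction to `S'`),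
    (h2 : IsUnit (lam • (1 : Matrix (Fin b ⊕ Fin c) (Fin b ⊕ Fin c) ℂ) -
      (A.submatrix (Equiv.sumAssoc (Fin a) (Fin b) (Fin c)).symm
        (Equiv.sumAssoc (Fin a) (Fin b) (Fin c)).symm).toBlocks₂₂).det)
    -- and outside the "spectrum" of the `b`-block of the reduced matrix.
    (h3 : IsUnit (lam • (1 : Matrix (Fin b) (Fin b) ℂ) - (red lam A).toBlocks₂₂).det) :
    red lam (red lam A) =
      red lam (A.submatrix (Equiv.sumAssoc (Fin a) (Fin b) (Fin c)).symm
        (Equiv.sumAssoc (Fin a) (Fin b) (Fin c)).symm) :=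
  stmt_1_general a b c A lam h1 h3
end

section
/- Eigenvector restriction under isospectral reduction: if Au = λ₀u and λ₀ is not an eigenvalue of the block F = A_{S̄,S̄}, then R(λ₀, S, A)·u_S = λ₀·u_S, where u_S is the restriction of u to the coordinates in S. -/
open Matrix

/-! The eigen-equation `A u = λ₀ u`, split along `S ⊕ S̄`, reads
`A₁₁ u₁ + A₁₂ u₂ = λ₀ u₁` and `A₂₁ u₁ + A₂₂ u₂ = λ₀ u₂`. When `λ₀ I - A₂₂` is invertible the second
equation solves for `u₂ = (λ₀ I - A₂₂)⁻¹ A₂₁ u₁`, and substituting this into the first one gives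
exactly `R(λ₀) u₁ = λ₀ u₁`. -/

namespace Matrix

variable {α β R : Type*} [Fintype α] [Fintype β] [CommRing R]

theorem mulVec_comp_inl (A : Matrix (α ⊕ β) (α ⊕ β) R) (u : α ⊕ β → R) :
    (A *ᵥ u) ∘ Sum.inl = A.toBlocks₁₁ *ᵥ (u ∘ Sum.inl) + A.toBlocks₁₂ *ᵥ (u ∘ Sum.inr) := by
  conv_lhs => rw [← fromBlocks_toBlocks A, ← Sum.elim_comp_inl_inr u, fromBlocks_mulVec]
  rfl

theorem mulVec_comp_inr (A : Matrix (α ⊕ β) (α ⊕ β) R) (u : α ⊕ β → R) :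
    (A *ᵥ u) ∘ Sum.inr = A.toBlocks₂₁ *ᵥ (u ∘ Sum.inl) + A.toBlocks₂₂ *ᵥ (u ∘ Sum.inr) := by
  conv_lhs => rw [← fromBlocks_toBlocks A, ← Sum.elim_comp_inl_inr u, fromBlocks_mulVec]
  rfl

variable [DecidableEq β]

theorem comp_inr_eq_of_mulVec_eq_smul {A : Matrix (α ⊕ β) (α ⊕ β) R} {lam : R} {u : α ⊕ β → R}
    (hu : A *ᵥ u = lam • u) (hF : IsUnit (lam • (1 : Matrix β β R) - A.toBlocks₂₂).det) :
    u ∘ Sum.inr = (lam • (1 : Matrix β β R) - A.toBlocks₂₂)⁻¹ *ᵥ (A.toBlocks₂₁ *ᵥ (u ∘ Sum.inl)) := by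
  have hblock : (lam • (1 : Matrix β β R) - A.toBlocks₂₂) *ᵥ (u ∘ Sum.inr)
      = A.toBlocks₂₁ *ᵥ (u ∘ Sum.inl) := by
    have h := mulVec_comp_inr A u
    rw [hu] at h
    rw [sub_mulVec, smul_mulVec, one_mulVec, sub_eq_iff_eq_add]
    exact h
  rw [← hblock, mulVec_mulVec, nonsing_inv_mul _ hF, one_mulVec]

theorem reduction_mulVec_comp_inl_eq_smul {A : Matrix (α ⊕ β) (α ⊕ β) R} {lam : R}
    {u : α ⊕ β → R} (hu : A *ᵥ u = lam • u)
    (hF : IsUnit (lam • (1 : Matrix β β R) - A.toBlocks₂₂).det) :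
    (A.toBlocks₁₁ + A.toBlocks₁₂ * (lam • (1 : Matrix β β R) - A.toBlocks₂₂)⁻¹ * A.toBlocks₂₁)
      *ᵥ (u ∘ Sum.inl) = lam • (u ∘ Sum.inl) := by
  have h := mulVec_comp_inl A u
  rw [hu, comp_inr_eq_of_mulVec_eq_smul hu hF] at h
  rw [add_mulVec, ← mulVec_mulVec, ← mulVec_mulVec]
  exact h.symm

end Matrix

theorem stmt_2 (s r : ℕ)
    (A : Matrix (Fin s ⊕ Fin r) (Fin s ⊕ Fin r) ℂ)
    (lam₀ : ℂ) (u : (Fin s ⊕ Fin r) → ℂ)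
    (hu : A.mulVec u = lam₀ • u)
    (hF : IsUnit (lam₀ • (1 : Matrix (Fin r) (Fin r) ℂ) - A.toBlocks₂₂).det) :
    (red lam₀ A).mulVec (u ∘ Sum.inl) = lam₀ • (u ∘ Sum.inl) :=
  reduction_mulVec_comp_inl_eq_smul hu hF
end

section
/- Walk generating function identity: let A be the adjacency matrix of a graph G and S a subset of vertices. Define W_S(t) = ((I − tA)⁻¹)_{S,S}, the S×S principal submatrix of the walk generating matrix, and define W*_S(t) = t·R(1/t, S, A), where R is the isospectral reduction. Then W_S(t) = (I − W*_S(t))⁻¹ for all t ≠ 0 in a neighborhood of 0 where all matrices are defined. -/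
open Matrix

/-!
The top-left block of `(1 - t • A)⁻¹` is, by the Schur complement formula, the inverse of the
Schur complement of the bottom-right block `1 - t • A₂₂`. Since `1 - t • A₂₂ = t • (t⁻¹ • 1 - A₂₂)`,
that Schur complement is exactly `1 - t • red t⁻¹ A`.
-/

namespace Matrix

variable {m n α : Type*} [DecidableEq m] [DecidableEq n]

theorem one_sub_smul_eq_fromBlocks [Ring α] (t : α) (A : Matrix (m ⊕ n) (m ⊕ n) α) :
    1 - t • A = fromBlocks (1 - t • A.toBlocks₁₁) (-(t • A.toBlocks₁₂))
      (-(t • A.toBlocks₂₁)) (1 - t • A.toBlocks₂₂) := by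
  ext (i | i) (j | j) <;> simp [toBlocks₁₁, toBlocks₁₂, toBlocks₂₁, toBlocks₂₂, one_apply]

theorem one_sub_smul_eq_smul_inv_smul_one_sub [DivisionRing α] {t : α} (ht : t ≠ 0)
    (A : Matrix n n α) : 1 - t • A = t • (t⁻¹ • 1 - A) := by
  rw [smul_sub, smul_smul, mul_inv_cancel₀ ht, one_smul]

variable [Fintype m] [Fintype n]

theorem toBlocks₁₁_inv_fromBlocks_of_isUnit [CommRing α] (A : Matrix m m α)
    (B : Matrix m n α) (C : Matrix n m α) {D : Matrix n n α} (hD : IsUnit D) :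
    (fromBlocks A B C D)⁻¹.toBlocks₁₁ = (A - B * D⁻¹ * C)⁻¹ := by
  have := hD.invertible
  rw [← invOf_eq_nonsing_inv D]
  by_cases hS : IsUnit (A - B * ⅟D * C)
  · have := hS.invertible
    have := fromBlocks₂₂Invertible A B C D
    rw [← invOf_eq_nonsing_inv, ← invOf_eq_nonsing_inv, invOf_fromBlocks₂₂_eq,
      toBlocks_fromBlocks₁₁]
  · -- then the block matrix is singular too, and both inverses are the junk value `0`
    have hM : ¬IsUnit (fromBlocks A B C D) := isUnit_fromBlocks_iff_of_invertible₂₂.not.mpr hS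
    rw [isUnit_iff_isUnit_det] at hS hM
    rw [nonsing_inv_apply_not_isUnit _ hS, nonsing_inv_apply_not_isUnit _ hM]
    rfl

end Matrix

theorem one_sub_smul_red_inv_eq {α β : Type} [Fintype α] [Fintype β] [DecidableEq α]
    [DecidableEq β] {t : ℂ} (ht : t ≠ 0) (A : Matrix (α ⊕ β) (α ⊕ β) ℂ)
    (hA : IsUnit (t⁻¹ • (1 : Matrix β β ℂ) - A.toBlocks₂₂).det) :
    1 - t • red t⁻¹ A = 1 - t • A.toBlocks₁₁ -
      -(t • A.toBlocks₁₂) * (1 - t • A.toBlocks₂₂)⁻¹ * -(t • A.toBlocks₂₁) := by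
  have := invertibleOfNonzero ht
  rw [one_sub_smul_eq_smul_inv_smul_one_sub ht A.toBlocks₂₂, Matrix.inv_smul _ t hA, invOf_eq_inv,
    red]
  simp only [Matrix.neg_mul, Matrix.mul_neg, Matrix.smul_mul, Matrix.mul_smul, smul_smul,
    mul_inv_cancel₀ ht, one_smul, neg_neg, smul_add, sub_sub, Matrix.mul_assoc]

theorem stmt_8_general (s r : ℕ)
    (A : Matrix (Fin s ⊕ Fin r) (Fin s ⊕ Fin r) ℂ)
    (t : ℂ) (ht : t ≠ 0)
    (hF : IsUnit (t⁻¹ • (1 : Matrix (Fin r) (Fin r) ℂ) - A.toBlocks₂₂).det) :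
    (((1 : Matrix (Fin s ⊕ Fin r) (Fin s ⊕ Fin r) ℂ) - t • A)⁻¹).toBlocks₁₁ =
      ((1 : Matrix (Fin s) (Fin s) ℂ) - t • red t⁻¹ A)⁻¹ := by
  have hD : IsUnit (1 - t • A.toBlocks₂₂) := by
    rw [one_sub_smul_eq_smul_inv_smul_one_sub ht]
    exact ((isUnit_iff_isUnit_det _).mpr hF).smul (Units.mk0 t ht)
  rw [one_sub_smul_eq_fromBlocks, toBlocks₁₁_inv_fromBlocks_of_isUnit _ _ _ hD,
    one_sub_smul_red_inv_eq ht A hF]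

theorem stmt_8 (s r : ℕ)
    (A : Matrix (Fin s ⊕ Fin r) (Fin s ⊕ Fin r) ℂ)
    (t : ℂ) (ht : t ≠ 0)
    (hIA : IsUnit ((1 : Matrix (Fin s ⊕ Fin r) (Fin s ⊕ Fin r) ℂ) - t • A).det)
    (hF : IsUnit (t⁻¹ • (1 : Matrix (Fin r) (Fin r) ℂ) - A.toBlocks₂₂).det) :
    (((1 : Matrix (Fin s ⊕ Fin r) (Fin s ⊕ Fin r) ℂ) - t • A)⁻¹).toBlocks₁₁ =
      ((1 : Matrix (Fin s) (Fin s) ℂ) - t • red t⁻¹ A)⁻¹ :=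
  stmt_8_general s r A t ht hF
end

section
/- Composition of generalized isospectral reductions: let Σ₁ be an n×k complex matrix with orthonormal columns and Σ₂ a k×r complex matrix with orthonormal columns. Then Σ₁Σ₂ has orthonormal columns and R(λ, Σ₁Σ₂, A) = R(λ, Σ₂, R(λ, Σ₁, A)) for all λ where the relevant inverses exist. -/
/-! `λ - R(λ, Σ, A)` is the inverse of the compression `Σ*(λ - A)⁻¹Σ`, so reducing twice
compresses `(λ - A)⁻¹` by `Σ₁` and then by `Σ₂`, which is compressing it by `Σ₁Σ₂`. -/

open Matrix

/-- Generalized isospectral reduction of `A` with respect to a matrix `Σ'` with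
orthonormal columns. -/
noncomputable def genred {n k : Type} [Fintype n] [Fintype k] [DecidableEq n] [DecidableEq k]
    (lam : ℂ) (S : Matrix n k ℂ) (A : Matrix n n ℂ) : Matrix k k ℂ :=
  lam • (1 : Matrix k k ℂ) - (Sᴴ * (lam • (1 : Matrix n n ℂ) - A)⁻¹ * S)⁻¹

theorem Matrix.conjTranspose_mul_self_eq_one_mul {m n p α : Type*} [Fintype m] [Fintype n]
    [DecidableEq n] [DecidableEq p] [Semiring α] [StarRing α]
    {S : Matrix m n α} {T : Matrix n p α} (hS : Sᴴ * S = 1) (hT : Tᴴ * T = 1) :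
    (S * T)ᴴ * (S * T) = 1 := by
  rw [conjTranspose_mul, Matrix.mul_assoc, ← Matrix.mul_assoc Sᴴ, hS, Matrix.one_mul, hT]

section genred

variable {n k r : Type} [Fintype n] [Fintype k] [Fintype r]
  [DecidableEq n] [DecidableEq k] [DecidableEq r]

theorem smul_one_sub_genred (lam : ℂ) (S : Matrix n k ℂ) (A : Matrix n n ℂ) :
    lam • (1 : Matrix k k ℂ) - genred lam S A = (Sᴴ * (lam • (1 : Matrix n n ℂ) - A)⁻¹ * S)⁻¹ :=
  sub_sub_cancel _ _

theorem inv_smul_one_sub_genred {lam : ℂ} {S : Matrix n k ℂ} {A : Matrix n n ℂ}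
    (hS : IsUnit (Sᴴ * (lam • (1 : Matrix n n ℂ) - A)⁻¹ * S).det) :
    (lam • (1 : Matrix k k ℂ) - genred lam S A)⁻¹ = Sᴴ * (lam • (1 : Matrix n n ℂ) - A)⁻¹ * S := by
  rw [smul_one_sub_genred, nonsing_inv_nonsing_inv _ hS]

theorem genred_mul {lam : ℂ} {S₁ : Matrix n k ℂ} (S₂ : Matrix k r ℂ) {A : Matrix n n ℂ}
    (hS₁ : IsUnit (S₁ᴴ * (lam • (1 : Matrix n n ℂ) - A)⁻¹ * S₁).det) :
    genred lam (S₁ * S₂) A = genred lam S₂ (genred lam S₁ A) := by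
  conv_rhs => rw [genred, inv_smul_one_sub_genred hS₁]
  rw [genred, conjTranspose_mul]
  simp only [Matrix.mul_assoc]

end genred

theorem stmt_9_general (n k r : ℕ)
    (A : Matrix (Fin n) (Fin n) ℂ)
    (S₁ : Matrix (Fin n) (Fin k) ℂ) (S₂ : Matrix (Fin k) (Fin r) ℂ)
    (h₁ : S₁ᴴ * S₁ = 1) (h₂ : S₂ᴴ * S₂ = 1)
    (lam : ℂ)
    (hc₁ : IsUnit (S₁ᴴ * (lam • (1 : Matrix (Fin n) (Fin n) ℂ) - A)⁻¹ * S₁).det) :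
    (S₁ * S₂)ᴴ * (S₁ * S₂) = 1 ∧
      genred lam (S₁ * S₂) A = genred lam S₂ (genred lam S₁ A) :=
  ⟨conjTranspose_mul_self_eq_one_mul h₁ h₂, genred_mul S₂ hc₁⟩

theorem stmt_9 (n k r : ℕ)
    (A : Matrix (Fin n) (Fin n) ℂ)
    (S₁ : Matrix (Fin n) (Fin k) ℂ) (S₂ : Matrix (Fin k) (Fin r) ℂ)
    (h₁ : S₁ᴴ * S₁ = 1) (h₂ : S₂ᴴ * S₂ = 1)
    (lam : ℂ)
    (hA : IsUnit (lam • (1 : Matrix (Fin n) (Fin n) ℂ) - A).det)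
    (hc₁ : IsUnit (S₁ᴴ * (lam • (1 : Matrix (Fin n) (Fin n) ℂ) - A)⁻¹ * S₁).det)
    (hred : IsUnit (lam • (1 : Matrix (Fin k) (Fin k) ℂ) - genred lam S₁ A).det)
    (hc₂ : IsUnit (S₂ᴴ * (lam • (1 : Matrix (Fin k) (Fin k) ℂ) - genred lam S₁ A)⁻¹ * S₂).det)
    (hc₁₂ : IsUnit ((S₁ * S₂)ᴴ * (lam • (1 : Matrix (Fin n) (Fin n) ℂ) - A)⁻¹ * (S₁ * S₂)).det) :
    (S₁ * S₂)ᴴ * (S₁ * S₂) = 1 ∧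
      genred lam (S₁ * S₂) A = genred lam S₂ (genred lam S₁ A) :=
  stmt_9_general n k r A S₁ S₂ h₁ h₂ lam hc₁
end

section
/- Characteristic polynomial of the generalized reduction: let Σ be an n×k complex matrix with orthonormal columns, and Δ an n×(n−k) matrix whose columns form an orthonormal basis for the orthogonal complement of the column space of Σ. Then det(λI − R(λ, Σ, A)) = det(λI − A) / det(λI − Δ*AΔ), for λ where all expressions are defined. -/
/-!
With `U = [S Δ]` unitary and `M = λI - A`, the conjugate `N = U* M U` has blocks `S* M S`, …,
`Δ* M Δ = λI - Δ* A Δ`, and `N⁻¹ = U* M⁻¹ U` has upper-left block `S* M⁻¹ S`, whose inverse is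
`λI - R(λ, S, A)`. Jacobi's complementary-minor identity `det (N⁻¹)₁₁ = det N₂₂ / det N`, with
`det N = det M`, gives the claim.
-/

open Matrix

namespace Matrix

variable {R : Type*} [CommRing R] {k m n : Type*} [Fintype n]

theorem fromRows_mul_mul_fromCols (X : Matrix k n R) (Y : Matrix m n R) (M : Matrix n n R)
    (Z : Matrix n k R) (W : Matrix n m R) :
    fromRows X Y * M * fromCols Z W =
      fromBlocks (X * M * Z) (X * M * W) (Y * M * Z) (Y * M * W) := by
  rw [fromRows_mul, fromRows_mul_fromCols]

theorem inv_conj_of_mul_eq_one [Fintype m] [DecidableEq m] [DecidableEq n] {P : Matrix m n R}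
    {Q : Matrix n m R} (hPQ : P * Q = 1) (hQP : Q * P = 1) (M : Matrix n n R) :
    (P * M * Q)⁻¹ = P * M⁻¹ * Q := by
  by_cases hM : IsUnit M.det
  · apply inv_eq_right_inv
    calc P * M * Q * (P * M⁻¹ * Q) = P * (M * (Q * P) * M⁻¹) * Q := by
          simp only [Matrix.mul_assoc]
      _ = 1 := by rw [hQP, Matrix.mul_one, mul_nonsing_inv M hM, Matrix.mul_one, hPQ]
  · have hN : ¬IsUnit (P * M * Q).det := by rwa [det_conj_of_mul_eq_one hPQ hQP]
    rw [nonsing_inv_apply_not_isUnit _ hM, nonsing_inv_apply_not_isUnit _ hN,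
      Matrix.mul_zero, Matrix.zero_mul]

/-- Jacobi's complementary-minor identity, via the Schur complement of the lower-right block. -/
theorem det_toBlocks₁₁_inv {K : Type*} [Field K] [Fintype k] [Fintype m] [DecidableEq k]
    [DecidableEq m]
    (N : Matrix (k ⊕ m) (k ⊕ m) K) (hN : IsUnit N.det) (hD : IsUnit N.toBlocks₂₂.det) :
    (N⁻¹).toBlocks₁₁.det = N.toBlocks₂₂.det / N.det := by
  obtain ⟨A, B, C, D, rfl⟩ : ∃ A B C D, N = fromBlocks A B C D :=
    ⟨_, _, _, _, (fromBlocks_toBlocks N).symm⟩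
  rw [toBlocks_fromBlocks₂₂] at hD ⊢
  let := D.invertibleOfIsUnitDet hD
  have hdet := det_fromBlocks₂₂ A B C D
  have hSchur : IsUnit (A - B * ⅟D * C).det := isUnit_of_mul_isUnit_right (hdet ▸ hN)
  let := (A - B * ⅟D * C).invertibleOfIsUnitDet hSchur
  let := fromBlocks₂₂Invertible A B C D
  rw [← invOf_eq_nonsing_inv, invOf_fromBlocks₂₂_eq, toBlocks_fromBlocks₁₁, invOf_eq_nonsing_inv,
    det_nonsing_inv, Ring.inverse_eq_inv', hdet]
  field_simp [hD.ne_zero]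

end Matrix

theorem stmt_10_general (n k m : ℕ)
    (A : Matrix (Fin n) (Fin n) ℂ)
    (S : Matrix (Fin n) (Fin k) ℂ) (Δ : Matrix (Fin n) (Fin m) ℂ)
    (hS : Sᴴ * S = 1) (hΔ : Δᴴ * Δ = 1) (horth : Sᴴ * Δ = 0)
    (hcomplete : S * Sᴴ + Δ * Δᴴ = 1)  -- columns of `Δ` span the orthogonal complement
    (lam : ℂ)
    (hA : IsUnit (lam • (1 : Matrix (Fin n) (Fin n) ℂ) - A).det)
    (hd : IsUnit (lam • (1 : Matrix (Fin m) (Fin m) ℂ) - Δᴴ * A * Δ).det) :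
    (lam • (1 : Matrix (Fin k) (Fin k) ℂ) - genred lam S A).det =
      (lam • (1 : Matrix (Fin n) (Fin n) ℂ) - A).det /
        (lam • (1 : Matrix (Fin m) (Fin m) ℂ) - Δᴴ * A * Δ).det := by
  set M := lam • (1 : Matrix (Fin n) (Fin n) ℂ) - A with hM
  have hΔS : Δᴴ * S = 0 := by simpa using congrArg conjTranspose horth
  have hUhU : fromRows Sᴴ Δᴴ * fromCols S Δ = 1 := by
    rw [fromRows_mul_fromCols, hS, hΔ, horth, hΔS, fromBlocks_one]
  have hUUh : fromCols S Δ * fromRows Sᴴ Δᴴ = 1 := by rw [fromCols_mul_fromRows, hcomplete]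
  set N := fromRows Sᴴ Δᴴ * M * fromCols S Δ with hN
  have hdetN : N.det = M.det := det_conj_of_mul_eq_one hUhU hUUh
  have hN₂₂ : N.toBlocks₂₂ = lam • 1 - Δᴴ * A * Δ := by
    rw [hN, fromRows_mul_mul_fromCols, toBlocks_fromBlocks₂₂, hM, Matrix.mul_sub, Matrix.sub_mul,
      Matrix.mul_smul, Matrix.smul_mul, Matrix.mul_one, hΔ]
  have hNinv₁₁ : (N⁻¹).toBlocks₁₁ = Sᴴ * M⁻¹ * S := by
    rw [hN, inv_conj_of_mul_eq_one hUhU hUUh, fromRows_mul_mul_fromCols, toBlocks_fromBlocks₁₁]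
  have hred : lam • 1 - genred lam S A = (Sᴴ * M⁻¹ * S)⁻¹ := by rw [genred, sub_sub_cancel]
  rw [hred, det_nonsing_inv, ← hNinv₁₁, det_toBlocks₁₁_inv N (hdetN ▸ hA) (hN₂₂ ▸ hd), hdetN,
    hN₂₂, Ring.inverse_eq_inv', inv_div]

theorem stmt_10 (n k m : ℕ)
    (A : Matrix (Fin n) (Fin n) ℂ)
    (S : Matrix (Fin n) (Fin k) ℂ) (Δ : Matrix (Fin n) (Fin m) ℂ)
    (hS : Sᴴ * S = 1) (hΔ : Δᴴ * Δ = 1) (horth : Sᴴ * Δ = 0)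
    (hcomplete : S * Sᴴ + Δ * Δᴴ = 1)  -- columns of `Δ` span the orthogonal complement
    (lam : ℂ)
    (hA : IsUnit (lam • (1 : Matrix (Fin n) (Fin n) ℂ) - A).det)
    (hc : IsUnit (Sᴴ * (lam • (1 : Matrix (Fin n) (Fin n) ℂ) - A)⁻¹ * S).det)
    (hd : IsUnit (lam • (1 : Matrix (Fin m) (Fin m) ℂ) - Δᴴ * A * Δ).det) :
    (lam • (1 : Matrix (Fin k) (Fin k) ℂ) - genred lam S A).det =
      (lam • (1 : Matrix (Fin n) (Fin n) ℂ) - A).det /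
        (lam • (1 : Matrix (Fin m) (Fin m) ℂ) - Δᴴ * A * Δ).det :=
  stmt_10_general n k m A S Δ hS hΔ horth hcomplete lam hA hd
end

section
/- Equitable partitions as generalized reductions: let A be an n×n matrix and P an n×k matrix with orthonormal columns satisfying AP = Pd for a k×k matrix d (so that d = PᵀAP). Then for every λ outside the spectra of A and d, the generalized isospectral reduction satisfies R(λ, P, A) = λI − (Pᵀ(λI − A)⁻¹P)⁻¹ = d; i.e., the generalized reduction with respect to P is the constant matrix d, independent of λ. -/
open Matrix

theorem stmt_12 (n k : ℕ)
    (A : Matrix (Fin n) (Fin n) ℂ)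
    (P : Matrix (Fin n) (Fin k) ℂ) (d : Matrix (Fin k) (Fin k) ℂ)
    (hP : Pᵀ * P = 1) (hAP : A * P = P * d)
    (lam : ℂ)
    (hA : IsUnit (lam • (1 : Matrix (Fin n) (Fin n) ℂ) - A).det)
    (hd : IsUnit (lam • (1 : Matrix (Fin k) (Fin k) ℂ) - d).det) :
    lam • (1 : Matrix (Fin k) (Fin k) ℂ) -
      (Pᵀ * (lam • (1 : Matrix (Fin n) (Fin n) ℂ) - A)⁻¹ * P)⁻¹ = d := by
  set M := lam • (1 : Matrix (Fin n) (Fin n) ℂ) - A with hM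
  set D := lam • (1 : Matrix (Fin k) (Fin k) ℂ) - d with hD
  have hMP : M * P = P * D := by
    rw [hM, hD, Matrix.sub_mul, Matrix.mul_sub, Matrix.smul_mul, Matrix.mul_smul,
      Matrix.one_mul, Matrix.mul_one, hAP]
  have hinv : M⁻¹ * P = P * D⁻¹ := by
    have h1 : M⁻¹ * (M * P) * D⁻¹ = M⁻¹ * (P * D) * D⁻¹ := by rw [hMP]
    rw [← Matrix.mul_assoc, Matrix.nonsing_inv_mul M hA, Matrix.one_mul,
      ← Matrix.mul_assoc, Matrix.mul_assoc (M⁻¹ * P), Matrix.mul_nonsing_inv D hd,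
      Matrix.mul_one] at h1
    exact h1.symm
  have h2 : Pᵀ * M⁻¹ * P = D⁻¹ := by
    rw [Matrix.mul_assoc, hinv, ← Matrix.mul_assoc, hP, Matrix.one_mul]
  rw [h2, Matrix.nonsing_inv_nonsing_inv D hd, hD, sub_sub_cancel]
end

section
/- Hermitian unfolding of a single simple pole: if ν ∈ ℝ and K is an s×s positive semidefinite Hermitian matrix, then there exists a Hermitian matrix A = [[0, X],[X*, νI]] whose isospectral reduction to the first s indices equals (λ − ν)⁻¹K. Conversely, if a function of the form (λ−ν)^{−n}K (K ≠ 0, n ≥ 1) equals the isospectral reduction of some Hermitian matrix to a principal block, then n = 1, ν is real, and K is positive semidefinite. -/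
/-!
Sufficiency: write `K = X Xᴴ`; the reduction of `[[0, X], [Xᴴ, ν]]` is `X (λ - ν)⁻¹ Xᴴ`.

Necessity: put `λ = 1/t`. Then `(λ - F)⁻¹ = t (1 - tF)⁻¹` with `(1 - tF)⁻¹ = 1 + t (1 - tF)⁻¹ F`
continuous at `t = 0`, so the reduction `M + B (λ - F)⁻¹ Bᴴ` equals `M + t B Bᴴ + t² B (1 - tF)⁻¹ F Bᴴ`,
while the prescribed value is `tⁿ (1 - tν)⁻ⁿ K`. Comparing the coefficients of `t` gives `B Bᴴ = K`
when `n = 1` and `B Bᴴ = 0`, hence `B = 0` and `K = 0`, when `n ≥ 2`. For `n = 1` the coefficient of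
`t²` gives `B F Bᴴ = ν K`; as the left side and `K` are Hermitian and `K ≠ 0`, `ν` is real.
-/

open Matrix ComplexOrder

open Filter Topology

theorem eq_of_eventuallyEq_nhdsNE {X Y : Type*} [TopologicalSpace X] [TopologicalSpace Y]
    [T2Space Y] {x : X} [(𝓝[≠] x).NeBot] {f g : X → Y} (hf : ContinuousAt f x)
    (hg : ContinuousAt g x) (h : f =ᶠ[𝓝[≠] x] g) : f x = g x :=
  ((hf.eventuallyEq_nhds_iff_eventuallyEq_nhdsNE hg).mp h).eq_of_nhds

theorem eq_and_eventuallyEq_of_add_smul {𝕜 E : Type*} [NontriviallyNormedField 𝕜]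
    [AddCommGroup E] [Module 𝕜 E] [TopologicalSpace E] [ContinuousAdd E] [ContinuousSMul 𝕜 E]
    [T2Space E] {a b : E} {f g : 𝕜 → E} (hf : ContinuousAt f 0) (hg : ContinuousAt g 0)
    (h : ∀ᶠ t in 𝓝[≠] 0, a + t • f t = b + t • g t) : a = b ∧ f =ᶠ[𝓝[≠] 0] g := by
  have hab : a = b := by
    simpa using eq_of_eventuallyEq_nhdsNE (continuousAt_const.add (continuousAt_id.smul hf))
      (continuousAt_const.add (continuousAt_id.smul hg)) h
  refine ⟨hab, ?_⟩
  filter_upwards [h, self_mem_nhdsWithin] with t ht ht0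
  rw [hab, add_right_inj] at ht
  exact (smul_right_inj ht0).mp ht

theorem continuousAt_inv_one_sub_mul_pow (ν : ℂ) (n : ℕ) :
    ContinuousAt (fun t : ℂ => ((1 - t * ν) ^ n)⁻¹) 0 :=
  ContinuousAt.inv₀ (by fun_prop) (by simp)

theorem eventually_one_sub_mul_ne_zero (ν : ℂ) : ∀ᶠ t in 𝓝[≠] (0 : ℂ), 1 - t * ν ≠ 0 :=
  eventually_nhdsWithin_of_eventually_nhds <|
    (continuousAt_const.sub (continuousAt_id.mul continuousAt_const)).eventually_ne (by simp)

theorem inv_pow_inv_sub {t : ℂ} (ht : t ≠ 0) (ν : ℂ) (n : ℕ) :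
    ((t⁻¹ - ν) ^ n)⁻¹ = t ^ n * ((1 - t * ν) ^ n)⁻¹ := by
  rw [show t⁻¹ - ν = t⁻¹ * (1 - t * ν) by field_simp, mul_pow, mul_inv, inv_pow, inv_inv]

section Resolvent

variable {n 𝕜 : Type*} [DecidableEq n] [NontriviallyNormedField 𝕜]

theorem inv_smul_one_sub_eq {F : Matrix n n 𝕜} {t : 𝕜} (ht : t ≠ 0) :
    t⁻¹ • (1 : Matrix n n 𝕜) - F = t⁻¹ • (1 - t • F) := by
  rw [smul_sub, smul_smul, inv_mul_cancel₀ ht, one_smul]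

variable [Fintype n]

theorem continuousAt_inv_one_sub_smul (F : Matrix n n 𝕜) :
    ContinuousAt (fun t : 𝕜 => (1 - t • F)⁻¹) 0 := by
  refine ContinuousAt.comp (g := Inv.inv) ?_ (by fun_prop)
  refine continuousAt_matrix_inv _ ?_
  simp [Ring.inverse_eq_inv']

theorem continuousAt_mul_inv_one_sub_smul_mul {l m : Type*} (B : Matrix l n 𝕜)
    (C : Matrix n m 𝕜) (F : Matrix n n 𝕜) :
    ContinuousAt (fun t : 𝕜 => B * (1 - t • F)⁻¹ * C) 0 :=
  ((continuous_const.matrix_mul continuous_id).matrix_mul continuous_const).continuousAt.comp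
    (continuousAt_inv_one_sub_smul F)

theorem eventually_isUnit_det_one_sub_smul (F : Matrix n n 𝕜) :
    ∀ᶠ t in 𝓝 (0 : 𝕜), IsUnit (1 - t • F).det := by
  have hcont : ContinuousAt (fun t : 𝕜 => (1 - t • F).det) 0 := by fun_prop
  filter_upwards [hcont.eventually_ne (by simp : (1 - (0 : 𝕜) • F).det ≠ 0)] with t ht
  exact isUnit_iff_ne_zero.mpr ht

theorem isUnit_det_inv_smul_one_sub {F : Matrix n n 𝕜} {t : 𝕜} (ht : t ≠ 0)
    (h : IsUnit (1 - t • F).det) : IsUnit (t⁻¹ • (1 : Matrix n n 𝕜) - F).det := by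
  rw [inv_smul_one_sub_eq ht, det_smul]
  exact ((isUnit_iff_ne_zero.mpr (inv_ne_zero ht)).pow _).mul h

theorem inv_inv_smul_one_sub {F : Matrix n n 𝕜} {t : 𝕜} (ht : t ≠ 0)
    (h : IsUnit (1 - t • F).det) : (t⁻¹ • (1 : Matrix n n 𝕜) - F)⁻¹ = t • (1 - t • F)⁻¹ := by
  refine inv_eq_left_inv ?_
  rw [inv_smul_one_sub_eq ht, smul_mul_smul_comm, mul_inv_cancel₀ ht, one_smul,
    nonsing_inv_mul _ h]

theorem inv_one_sub_smul_eq {F : Matrix n n 𝕜} {t : 𝕜} (h : IsUnit (1 - t • F).det) :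
    (1 - t • F)⁻¹ = 1 + t • ((1 - t • F)⁻¹ * F) := by
  have hG := nonsing_inv_mul _ h
  rw [Matrix.mul_sub, Matrix.mul_one, Matrix.mul_smul] at hG
  exact sub_eq_iff_eq_add.mp hG

end Resolvent

open scoped MatrixOrder in
theorem Matrix.PosSemidef.exists_eq_mul_conjTranspose {n 𝕜 : Type*} [Fintype n] [DecidableEq n]
    [RCLike 𝕜] {K : Matrix n n 𝕜} (hK : K.PosSemidef) : ∃ X : Matrix n n 𝕜, K = X * Xᴴ :=
  ⟨CFC.sqrt K, by rw [(CFC.sqrt_nonneg K).posSemidef.1.eq, CFC.sqrt_mul_sqrt_self K hK.nonneg]⟩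

theorem isHermitian_fromBlocks_zero_smul_one {α β : Type*} [DecidableEq β] (X : Matrix α β ℂ)
    (c : ℝ) : (fromBlocks 0 X Xᴴ ((c : ℂ) • (1 : Matrix β β ℂ))).IsHermitian :=
  IsHermitian.fromBlocks isHermitian_zero rfl (by simp [IsHermitian])

section Expansion

variable {α β : Type*} [Fintype β] [DecidableEq β]

theorem eq_zero_of_expansion_of_two_le_order [Fintype α] {B : Matrix α β ℂ}
    {F : Matrix β β ℂ} {ν : ℂ} {j : ℕ} {K : Matrix α α ℂ}
    (h : ∀ᶠ t in 𝓝[≠] (0 : ℂ), B * Bᴴ + t • (B * (1 - t • F)⁻¹ * (F * Bᴴ)) =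
      (t ^ (j + 1) * ((1 - t * ν) ^ (j + 2))⁻¹) • K) : K = 0 := by
  have hB : B = 0 := by
    rw [← self_mul_conjTranspose_eq_zero]
    simpa using eq_of_eventuallyEq_nhdsNE
      (continuousAt_const.add (continuousAt_id.smul (continuousAt_mul_inv_one_sub_smul_mul _ _ F)))
      (((continuousAt_id.pow _).mul (continuousAt_inv_one_sub_mul_pow ν _)).smul
        continuousAt_const) h
  obtain ⟨t, ht, ht0, hν⟩ :=
    (h.and (eventually_mem_nhdsWithin.and (eventually_one_sub_mul_ne_zero ν))).exists
  simp only [hB, Matrix.zero_mul, conjTranspose_zero, Matrix.mul_zero, smul_zero, add_zero] at ht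
  exact (smul_eq_zero.mp ht.symm).resolve_left
    (mul_ne_zero (pow_ne_zero _ ht0) (inv_ne_zero (pow_ne_zero _ hν)))

theorem im_eq_zero_and_eq_of_expansion_of_order_one {B : Matrix α β ℂ} {F : Matrix β β ℂ}
    (hF : F.IsHermitian) {ν : ℂ} {K : Matrix α α ℂ} (hK : K ≠ 0)
    (h : ∀ᶠ t in 𝓝[≠] (0 : ℂ), B * Bᴴ + t • (B * (1 - t • F)⁻¹ * (F * Bᴴ)) =
      (1 - t * ν)⁻¹ • K) : ν.im = 0 ∧ K = B * Bᴴ := by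
  have h' : ∀ᶠ t in 𝓝[≠] (0 : ℂ), B * Bᴴ + t • (B * (1 - t • F)⁻¹ * (F * Bᴴ)) =
      K + t • ((ν * (1 - t * ν)⁻¹) • K) := by
    filter_upwards [h, eventually_one_sub_mul_ne_zero ν] with t ht hν
    have hscalar : (1 - t * ν)⁻¹ = 1 + t * (ν * (1 - t * ν)⁻¹) := by
      field_simp
      ring
    rw [ht, smul_smul]
    conv_lhs => rw [hscalar]
    rw [add_smul, one_smul]
  have hq : ContinuousAt (fun t : ℂ => (ν * (1 - t * ν)⁻¹) • K) 0 := by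
    fun_prop (disch := simp)
  obtain ⟨hBB, hsecond⟩ :=
    eq_and_eventuallyEq_of_add_smul (continuousAt_mul_inv_one_sub_smul_mul _ _ F) hq h'
  have hBFB : B * (F * Bᴴ) = ν • K := by
    simpa using eq_of_eventuallyEq_nhdsNE (continuousAt_mul_inv_one_sub_smul_mul _ _ F) hq hsecond
  have hstar : star ν • K = ν • K := by
    have h : (ν • K)ᴴ = ν • K := by
      rw [← hBFB, conjTranspose_mul, conjTranspose_mul, conjTranspose_conjTranspose, hF.eq,
        Matrix.mul_assoc]
    rwa [conjTranspose_smul, ← hBB, (isHermitian_mul_conjTranspose_self B).eq, hBB] at h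
  exact ⟨Complex.conj_eq_iff_im.mp (smul_left_injective ℂ hK hstar), hBB.symm⟩

end Expansion

section Reduction

variable {α β : Type} [Fintype α] [Fintype β] [DecidableEq α] [DecidableEq β]

theorem red_fromBlocks_zero_smul_one (X : Matrix α β ℂ) {c lam : ℂ} (h : lam ≠ c) :
    red lam (fromBlocks 0 X Xᴴ (c • (1 : Matrix β β ℂ))) = (lam - c)⁻¹ • (X * Xᴴ) := by
  have hinv : (lam • (1 : Matrix β β ℂ) - c • 1)⁻¹ = (lam - c)⁻¹ • 1 := by
    rw [← sub_smul]
    refine inv_eq_right_inv ?_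
    rw [smul_mul_smul_comm, one_mul, mul_inv_cancel₀ (sub_ne_zero.mpr h), one_smul]
  simp [red, hinv]

theorem eventually_red_inv_eq (A : Matrix (α ⊕ β) (α ⊕ β) ℂ) :
    ∀ᶠ t in 𝓝[≠] (0 : ℂ), IsUnit (t⁻¹ • (1 : Matrix β β ℂ) - A.toBlocks₂₂).det ∧
      red t⁻¹ A = A.toBlocks₁₁ +
        t • (A.toBlocks₁₂ * (1 - t • A.toBlocks₂₂)⁻¹ * A.toBlocks₂₁) := by
  filter_upwards [self_mem_nhdsWithin, eventually_nhdsWithin_of_eventually_nhds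
    (eventually_isUnit_det_one_sub_smul A.toBlocks₂₂)] with t ht hdet
  refine ⟨isUnit_det_inv_smul_one_sub ht hdet, ?_⟩
  rw [red, inv_inv_smul_one_sub ht hdet, Matrix.mul_smul, Matrix.smul_mul]

theorem eventually_expansion_of_red_eq (A : Matrix (α ⊕ β) (α ⊕ β) ℂ) (ν : ℂ) (n : ℕ)
    (K : Matrix α α ℂ)
    (hred : ∀ lam : ℂ, IsUnit (lam • (1 : Matrix β β ℂ) - A.toBlocks₂₂).det →
      red lam A = ((lam - ν) ^ (n + 1))⁻¹ • K) :
    ∀ᶠ t in 𝓝[≠] (0 : ℂ), A.toBlocks₁₂ * A.toBlocks₂₁ +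
      t • (A.toBlocks₁₂ * (1 - t • A.toBlocks₂₂)⁻¹ * (A.toBlocks₂₂ * A.toBlocks₂₁)) =
        (t ^ n * ((1 - t * ν) ^ (n + 1))⁻¹) • K := by
  set F := A.toBlocks₂₂
  have hred' : ∀ᶠ t in 𝓝[≠] (0 : ℂ),
      A.toBlocks₁₁ + t • (A.toBlocks₁₂ * (1 - t • F)⁻¹ * A.toBlocks₂₁) =
        0 + t • ((t ^ n * ((1 - t * ν) ^ (n + 1))⁻¹) • K) := by
    filter_upwards [eventually_red_inv_eq A, self_mem_nhdsWithin] with t ⟨hdet, heq⟩ ht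
    rw [← heq, hred _ hdet, inv_pow_inv_sub ht, zero_add, smul_smul, pow_succ', mul_assoc]
  have hg : ContinuousAt (fun t : ℂ => (t ^ n * ((1 - t * ν) ^ (n + 1))⁻¹) • K) 0 :=
    ((continuousAt_id.pow n).mul (continuousAt_inv_one_sub_mul_pow ν (n + 1))).smul
      continuousAt_const
  have hfirst := (eq_and_eventuallyEq_of_add_smul
    (continuousAt_mul_inv_one_sub_smul_mul _ _ F) hg hred').2
  filter_upwards [hfirst, eventually_nhdsWithin_of_eventually_nhds
    (eventually_isUnit_det_one_sub_smul F)] with t ht hdet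
  rw [← ht]
  conv_rhs => rw [inv_one_sub_smul_eq hdet]
  simp only [Matrix.mul_add, Matrix.add_mul, Matrix.mul_one, Matrix.mul_smul, Matrix.smul_mul,
    Matrix.mul_assoc]

theorem Matrix.IsHermitian.order_eq_one_and_im_eq_zero_and_posSemidef_of_red_eq
    {A : Matrix (α ⊕ β) (α ⊕ β) ℂ} (hA : A.IsHermitian) {ν : ℂ} {n : ℕ} (hn : 1 ≤ n)
    {K : Matrix α α ℂ} (hK : K ≠ 0)
    (hred : ∀ lam : ℂ, IsUnit (lam • (1 : Matrix β β ℂ) - A.toBlocks₂₂).det →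
      red lam A = ((lam - ν) ^ n)⁻¹ • K) :
    n = 1 ∧ ν.im = 0 ∧ K.PosSemidef := by
  obtain ⟨n, rfl⟩ := Nat.exists_eq_add_of_le' hn
  obtain ⟨-, hBC, -, hF⟩ := isHermitian_fromBlocks_iff.mp (by rwa [fromBlocks_toBlocks])
  have hexp := eventually_expansion_of_red_eq A ν n K hred
  rw [← hBC] at hexp
  cases n with
  | zero =>
    obtain ⟨hν, rfl⟩ := im_eq_zero_and_eq_of_expansion_of_order_one hF hK (by simpa using hexp)
    exact ⟨rfl, hν, posSemidef_self_mul_conjTranspose _⟩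
  | succ j => exact absurd (eq_zero_of_expansion_of_two_le_order hexp) hK

end Reduction

theorem stmt_14 (s : ℕ) :
    -- Sufficiency: a single simple real pole with PSD residue has a Hermitian unfolding
    -- of the form `[[0, X], [X*, νI]]`.
    (∀ (ν : ℝ) (K : Matrix (Fin s) (Fin s) ℂ), K.PosSemidef →
      ∃ (r : ℕ) (X : Matrix (Fin s) (Fin r) ℂ),
        (Matrix.fromBlocks 0 X Xᴴ ((ν : ℂ) • (1 : Matrix (Fin r) (Fin r) ℂ))).IsHermitian ∧
        ∀ lam : ℂ, lam ≠ (ν : ℂ) →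
          red lam (Matrix.fromBlocks 0 X Xᴴ ((ν : ℂ) • (1 : Matrix (Fin r) (Fin r) ℂ))) =
            (lam - (ν : ℂ))⁻¹ • K) ∧
    -- Necessity: if `(λ-ν)^{-n} K` (with `K ≠ 0`, `n ≥ 1`) is the reduction of a Hermitian
    -- matrix, then `n = 1`, `ν` is real, and `K` is positive semidefinite.
    (∀ (ν : ℂ) (nn : ℕ) (K : Matrix (Fin s) (Fin s) ℂ), K ≠ 0 → 1 ≤ nn →
      ∀ (r : ℕ) (A : Matrix (Fin s ⊕ Fin r) (Fin s ⊕ Fin r) ℂ), A.IsHermitian →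
        (∀ lam : ℂ, IsUnit (lam • (1 : Matrix (Fin r) (Fin r) ℂ) - A.toBlocks₂₂).det →
          red lam A = ((lam - ν) ^ nn)⁻¹ • K) →
        nn = 1 ∧ ν.im = 0 ∧ K.PosSemidef) := by
  refine ⟨fun ν K hK => ?_, fun ν nn K hK hnn r A hA hred =>
    hA.order_eq_one_and_im_eq_zero_and_posSemidef_of_red_eq hnn hK hred⟩
  obtain ⟨X, rfl⟩ := hK.exists_eq_mul_conjTranspose
  exact ⟨s, X, isHermitian_fromBlocks_zero_smul_one X ν,
    fun lam hlam => red_fromBlocks_zero_smul_one X hlam⟩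
end

section
/- Every Hermitian matrix with trace zero is unitarily similar to a hollow matrix (a matrix with all diagonal entries equal to zero). -/
/-!
Diagonalize `H` unitarily, `Vᴴ H V = diagonal d`. Conjugating a diagonal matrix by a unitary `F`
all of whose entries have modulus `1 / √n`, such as the discrete Fourier matrix, gives the
diagonal entries `∑ k, |F k i|² d k = (∑ k, d k) / n = tr H / n`. Hence `U = V F` makes every
diagonal entry of `Uᴴ H U` equal to `tr H / n`, which is `0` when `H` has trace zero.
-/

open Matrix Finset

namespace ZMod

noncomputable def dftMatrix (N : ℕ) [NeZero N] : Matrix (ZMod N) (ZMod N) ℂ :=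
  of fun j k => ((√N : ℝ) : ℂ)⁻¹ * stdAddChar (j * k)

variable {N : ℕ} [NeZero N]

theorem star_stdAddChar (x : ZMod N) : star (stdAddChar x) = stdAddChar (-x) := by
  rw [stdAddChar_apply, stdAddChar_apply, AddChar.map_neg_eq_inv, Circle.coe_inv_eq_conj]
  rfl

theorem star_dftMatrix_apply_mul_dftMatrix_apply (k i j : ZMod N) :
    star (dftMatrix N k i) * dftMatrix N k j = (N : ℂ)⁻¹ * stdAddChar (k * (j - i)) := by
  have hsqrt : ((√N : ℝ) : ℂ)⁻¹ * ((√N : ℝ) : ℂ)⁻¹ = (N : ℂ)⁻¹ := by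
    rw [← mul_inv, ← Complex.ofReal_mul, Real.mul_self_sqrt N.cast_nonneg, Complex.ofReal_natCast]
  simp only [dftMatrix, of_apply, star_mul', star_stdAddChar, star_inv₀, Complex.star_def,
    Complex.conj_ofReal]
  rw [mul_sub, sub_eq_neg_add, AddChar.map_add_eq_mul, ← hsqrt]
  ring

theorem dftMatrix_mem_unitaryGroup : dftMatrix N ∈ unitaryGroup (ZMod N) ℂ := by
  rw [mem_unitaryGroup_iff']
  ext i j
  simp only [mul_apply, star_apply, star_dftMatrix_apply_mul_dftMatrix_apply, ← mul_sum,
    AddChar.sum_mulShift _ (isPrimitive_stdAddChar N), sub_eq_zero, one_apply, eq_comm (a := j)]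
  split_ifs <;> simp [NeZero.ne]

end ZMod

namespace Matrix

theorem conjTranspose_mul_diagonal_mul_apply_self {m n R : Type*} [Fintype m] [DecidableEq m]
    [CommSemiring R] [StarRing R] (U : Matrix m n R) (d : m → R) (c : R) (i : n)
    (hU : ∀ k, star (U k i) * U k i = c) :
    (Uᴴ * diagonal d * U) i i = c * ∑ k, d k := by
  rw [mul_apply, mul_sum]
  exact sum_congr rfl fun k _ => by
    rw [mul_diagonal, conjTranspose_apply, mul_right_comm, hU, mul_comm]

theorem submatrix_equiv_mem_unitaryGroup {m n α : Type*} [Fintype m] [DecidableEq m] [Fintype n]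
    [DecidableEq n] [CommRing α] [StarRing α] {A : Matrix n n α} (hA : A ∈ unitaryGroup n α)
    (e : m ≃ n) : A.submatrix e e ∈ unitaryGroup m α := by
  rw [mem_unitaryGroup_iff', star_eq_conjTranspose, conjTranspose_submatrix, submatrix_mul_equiv,
    ← star_eq_conjTranspose, mem_unitaryGroup_iff'.mp hA, submatrix_one_equiv]

theorem exists_mem_unitaryGroup_star_apply_mul_self_eq (ι : Type*) [Fintype ι] [DecidableEq ι] :
    ∃ U ∈ unitaryGroup ι ℂ, ∀ k i, star (U k i) * U k i = (Fintype.card ι : ℂ)⁻¹ := by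
  cases isEmpty_or_nonempty ι
  · exact ⟨1, one_mem _, fun k => isEmptyElim k⟩
  let e : ι ≃ ZMod (Fintype.card ι) := (Fintype.equivFin ι).trans (ZMod.finEquiv _).toEquiv
  refine ⟨(ZMod.dftMatrix _).submatrix e e,
    submatrix_equiv_mem_unitaryGroup ZMod.dftMatrix_mem_unitaryGroup e, fun k i => ?_⟩
  rw [submatrix_apply, ZMod.star_dftMatrix_apply_mul_dftMatrix_apply, sub_self, mul_zero,
    AddChar.map_zero_eq_one, mul_one]

theorem IsHermitian.exists_mem_unitaryGroup_conj_apply_self_eq_trace_div_card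
    {ι : Type*} [Fintype ι] [DecidableEq ι] {H : Matrix ι ι ℂ} (hH : H.IsHermitian) :
    ∃ U ∈ unitaryGroup ι ℂ, ∀ i, (Uᴴ * H * U) i i = H.trace / Fintype.card ι := by
  obtain ⟨F, hF, hF_flat⟩ := exists_mem_unitaryGroup_star_apply_mul_self_eq ι
  set V : Matrix ι ι ℂ := (hH.eigenvectorUnitary : Matrix ι ι ℂ)
  have hdiag : Vᴴ * H * V = diagonal (RCLike.ofReal ∘ hH.eigenvalues) := by
    simpa [star_eq_conjTranspose] using hH.conjStarAlgAut_star_eigenvectorUnitary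
  refine ⟨V * F, mul_mem hH.eigenvectorUnitary.2 hF, fun i => ?_⟩
  calc ((V * F)ᴴ * H * (V * F)) i i = (Fᴴ * (Vᴴ * H * V) * F) i i := by
        simp only [conjTranspose_mul, Matrix.mul_assoc]
    _ = H.trace / Fintype.card ι := by
        rw [hdiag, conjTranspose_mul_diagonal_mul_apply_self _ _ _ i (hF_flat · i),
          hH.trace_eq_sum_eigenvalues, div_eq_inv_mul]
        rfl

end Matrix

theorem stmt_16 (n : ℕ) (H : Matrix (Fin n) (Fin n) ℂ)
    (hH : H.IsHermitian) (htr : H.trace = 0) :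
    ∃ U : Matrix (Fin n) (Fin n) ℂ,
      U ∈ Matrix.unitaryGroup (Fin n) ℂ ∧ ∀ i, (Uᴴ * H * U) i i = 0 := by
  obtain ⟨U, hU, hU_diag⟩ := hH.exists_mem_unitaryGroup_conj_apply_self_eq_trace_div_card
  exact ⟨U, hU, fun i => by rw [hU_diag, htr, zero_div]⟩
end

section
/- Equal reductions imply equal restricted quantum walks: if A and B are Hermitian matrices (possibly of different sizes) with index subsets S and T of the same cardinality such that R(λ, S, A) = R(λ, T, B) as rational matrix functions (for all λ in a common domain with nonempty interior, e.g., all non-real λ), then (e^{−itA})_{S,S} = (e^{−itB})_{T,T} for all real t (after identifying S with T). In particular, there is perfect state transfer between two vertices u,v ∈ S in A at time τ, i.e., e^{−iτA}e_u = γe_v for a unit complex γ, if and only if the same holds between the corresponding vertices of T in B. -/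
/-!
Writing `λ = z⁻¹`, the reduction is `A₁₁ + z • A₁₂ (1 - z A₂₂)⁻¹ A₂₁`, a function analytic at
`z = 0` with Taylor coefficients `A₁₁` and `A₁₂ A₂₂ᵏ A₂₁`. Two such functions agreeing at all
non-real `z` agree near `0` by the identity theorem, so these "moments" coincide for `A` and `B`.
The moments determine every `(Aᵐ)₁₁` (split a walk in `S` at its excursions outside `S`), hence
the `S`-block of `exp (-itA)`. Perfect state transfer from `u` to `v` is a statement about a
column of a unitary matrix: its `S`-part has norm one already, so the rest of it vanishes.
-/

open Matrix

-- Any submultiplicative norm would do: it only makes the Neumann and exponential series converge.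
attribute [local instance] Matrix.linftyOpNormedRing Matrix.linftyOpNormedAlgebra

open Filter Topology

lemma Matrix.inv_smul_of_ne_zero {n K : Type*} [Fintype n] [DecidableEq n] [Field K] {k : K}
    (hk : k ≠ 0) (X : Matrix n n K) : (k • X)⁻¹ = k⁻¹ • X⁻¹ := by
  by_cases hX : IsUnit X.det
  · exact inv_smul' X (Units.mk0 k hk) hX
  · have hkX : ¬ IsUnit (k • X).det := by
      rwa [det_smul, IsUnit.mul_iff, not_and, imp_iff_not_or, or_iff_right]
      exact not_not.mpr ((Ne.isUnit hk).pow _)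
    rw [nonsing_inv_apply_not_isUnit _ hX, nonsing_inv_apply_not_isUnit _ hkX, smul_zero]

section Reduction

variable {α β : Type} [Fintype α] [Fintype β] [DecidableEq α] [DecidableEq β]

noncomputable def reductionTail (A : Matrix (α ⊕ β) (α ⊕ β) ℂ) (z : ℂ) : Matrix α α ℂ :=
  A.toBlocks₁₂ * Ring.inverse (1 - z • A.toBlocks₂₂) * A.toBlocks₂₁

lemma red_inv_eq {z : ℂ} (hz : z ≠ 0) (A : Matrix (α ⊕ β) (α ⊕ β) ℂ) :
    red z⁻¹ A = A.toBlocks₁₁ + z • reductionTail A z := by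
  have h : z⁻¹ • (1 : Matrix β β ℂ) - A.toBlocks₂₂ = z⁻¹ • (1 - z • A.toBlocks₂₂) := by
    rw [smul_sub, smul_smul, inv_mul_cancel₀ hz, one_smul]
  rw [red, reductionTail, h, Matrix.inv_smul_of_ne_zero (inv_ne_zero hz), inv_inv,
    nonsing_inv_eq_ringInverse, Matrix.mul_smul, Matrix.smul_mul]

lemma hasFPowerSeriesOnBall_reductionTail (A : Matrix (α ⊕ β) (α ⊕ β) ℂ) :
    HasFPowerSeriesOnBall (reductionTail A)
      (fun n => ContinuousMultilinearMap.mkPiRing ℂ (Fin n)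
        (A.toBlocks₁₂ * A.toBlocks₂₂ ^ n * A.toBlocks₂₁)) 0 ‖A.toBlocks₂₂‖₊⁻¹ := by
  let g : Matrix β β ℂ →L[ℂ] Matrix α α ℂ := LinearMap.toContinuousLinearMap
    { toFun := fun X => A.toBlocks₁₂ * X * A.toBlocks₂₁
      map_add' := fun X Y => by rw [Matrix.mul_add, Matrix.add_mul]
      map_smul' := fun c X => by rw [Matrix.mul_smul, Matrix.smul_mul, RingHom.id_apply] }
  have hp : g.compFormalMultilinearSeries
      (fun n => ContinuousMultilinearMap.mkPiRing ℂ (Fin n) (A.toBlocks₂₂ ^ n)) =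
      fun n => ContinuousMultilinearMap.mkPiRing ℂ (Fin n)
        (A.toBlocks₁₂ * A.toBlocks₂₂ ^ n * A.toBlocks₂₁) := by
    ext n : 2
    change g (ContinuousMultilinearMap.mkPiRing ℂ (Fin n) (A.toBlocks₂₂ ^ n) fun _ => 1) = _
    simp [g]
  have h : HasFPowerSeriesOnBall (reductionTail A) (g.compFormalMultilinearSeries
      fun n => ContinuousMultilinearMap.mkPiRing ℂ (Fin n) (A.toBlocks₂₂ ^ n)) 0
      ‖A.toBlocks₂₂‖₊⁻¹ :=
    g.comp_hasFPowerSeriesOnBall (spectrum.hasFPowerSeriesOnBall_inverse_one_sub_smul ℂ _)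
  rwa [hp] at h

lemma Complex.frequently_im_ne_zero : ∃ᶠ z in 𝓝[≠] (0 : ℂ), z.im ≠ 0 := by
  have h : Tendsto (fun t : ℝ => (t : ℂ) * Complex.I) (𝓝[≠] 0) (𝓝[≠] 0) := by
    refine tendsto_nhdsWithin_of_tendsto_nhds_of_eventually_within _ ?_ ?_
    · exact ((Complex.continuous_ofReal.mul continuous_const).tendsto' 0 0 (by simp)).mono_left
        nhdsWithin_le_nhds
    · filter_upwards [self_mem_nhdsWithin] with t ht
      simpa using ht
  refine h.frequently (Eventually.frequently ?_)
  filter_upwards [self_mem_nhdsWithin] with t ht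
  simpa using ht

theorem moments_eq_of_red_eq {γ : Type} [Fintype γ] [DecidableEq γ]
    {A : Matrix (α ⊕ β) (α ⊕ β) ℂ} {B : Matrix (α ⊕ γ) (α ⊕ γ) ℂ}
    (heq : ∀ lam : ℂ, lam.im ≠ 0 → red lam A = red lam B) :
    A.toBlocks₁₁ = B.toBlocks₁₁ ∧
      ∀ k, A.toBlocks₁₂ * A.toBlocks₂₂ ^ k * A.toBlocks₂₁ =
        B.toBlocks₁₂ * B.toBlocks₂₂ ^ k * B.toBlocks₂₁ := by
  have hA := (hasFPowerSeriesOnBall_reductionTail A).hasFPowerSeriesAt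
  have hB := (hasFPowerSeriesOnBall_reductionTail B).hasFPowerSeriesAt
  have hfreq : ∃ᶠ z in 𝓝[≠] (0 : ℂ),
      A.toBlocks₁₁ + z • reductionTail A z = B.toBlocks₁₁ + z • reductionTail B z := by
    refine Complex.frequently_im_ne_zero.mono fun z hz => ?_
    have hz0 : z ≠ 0 := fun h => hz (by simp [h])
    rw [← red_inv_eq hz0, ← red_inv_eq hz0]
    refine heq _ ?_
    rw [Complex.inv_im]
    exact div_ne_zero (neg_ne_zero.mpr hz) (Complex.normSq_pos.mpr hz0).ne'
  have hFA : AnalyticAt ℂ (fun z => A.toBlocks₁₁ + z • reductionTail A z) 0 :=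
    analyticAt_const.add (analyticAt_id.smul hA.analyticAt)
  have hFB : AnalyticAt ℂ (fun z => B.toBlocks₁₁ + z • reductionTail B z) 0 :=
    analyticAt_const.add (analyticAt_id.smul hB.analyticAt)
  have hev := (hFA.frequently_eq_iff_eventually_eq hFB).mp hfreq
  have h11 : A.toBlocks₁₁ = B.toBlocks₁₁ := by simpa using hev.self_of_nhds
  refine ⟨h11, fun k => ?_⟩
  have htail : ∃ᶠ z in 𝓝[≠] (0 : ℂ), reductionTail A z = reductionTail B z := by
    refine Eventually.frequently ?_
    filter_upwards [nhdsWithin_le_nhds hev, self_mem_nhdsWithin] with z hz hz0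
    rw [h11, add_right_inj] at hz
    exact smul_right_injective _ hz0 hz
  have hp := hA.eq_formalMultilinearSeries_of_eventually hB
    ((hA.analyticAt.frequently_eq_iff_eventually_eq hB.analyticAt).mp htail)
  exact ContinuousMultilinearMap.mkPiRing_eq_iff.mp (congrFun hp k)

end Reduction

section Blocks

variable {R : Type*} {m n k l p q : Type*} [Fintype k] [Fintype l]

lemma Matrix.toBlocks₁₁_mul [NonUnitalNonAssocSemiring R] (X : Matrix (m ⊕ n) (k ⊕ l) R)
    (Y : Matrix (k ⊕ l) (p ⊕ q) R) :
    (X * Y).toBlocks₁₁ = X.toBlocks₁₁ * Y.toBlocks₁₁ + X.toBlocks₁₂ * Y.toBlocks₂₁ := by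
  ext i j
  simp [toBlocks₁₁, toBlocks₁₂, toBlocks₂₁, mul_apply, Fintype.sum_sum_type]

lemma Matrix.toBlocks₁₂_mul [NonUnitalNonAssocSemiring R] (X : Matrix (m ⊕ n) (k ⊕ l) R)
    (Y : Matrix (k ⊕ l) (p ⊕ q) R) :
    (X * Y).toBlocks₁₂ = X.toBlocks₁₁ * Y.toBlocks₁₂ + X.toBlocks₁₂ * Y.toBlocks₂₂ := by
  ext i j
  simp [toBlocks₁₁, toBlocks₁₂, toBlocks₂₂, mul_apply, Fintype.sum_sum_type]

end Blocks

lemma Matrix.toBlocks₁₂_pow_succ_mul_pow_mul {R α β : Type*} [Semiring R] [Fintype α]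
    [Fintype β] [DecidableEq α] [DecidableEq β] (A : Matrix (α ⊕ β) (α ⊕ β) R) (m k : ℕ) :
    (A ^ (m + 1)).toBlocks₁₂ * A.toBlocks₂₂ ^ k * A.toBlocks₂₁ =
      (A ^ m).toBlocks₁₁ * (A.toBlocks₁₂ * A.toBlocks₂₂ ^ k * A.toBlocks₂₁) +
        (A ^ m).toBlocks₁₂ * A.toBlocks₂₂ ^ (k + 1) * A.toBlocks₂₁ := by
  rw [pow_succ, toBlocks₁₂_mul, pow_succ']
  simp only [Matrix.add_mul, Matrix.mul_assoc]

lemma Matrix.toBlocks₁₁_pow_eq {R α β γ : Type*} [Semiring R] [Fintype α] [Fintype β] [Fintype γ]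
    [DecidableEq α] [DecidableEq β] [DecidableEq γ]
    {A : Matrix (α ⊕ β) (α ⊕ β) R} {B : Matrix (α ⊕ γ) (α ⊕ γ) R}
    (h11 : A.toBlocks₁₁ = B.toBlocks₁₁)
    (hmom : ∀ k, A.toBlocks₁₂ * A.toBlocks₂₂ ^ k * A.toBlocks₂₁ =
      B.toBlocks₁₂ * B.toBlocks₂₂ ^ k * B.toBlocks₂₁) (m : ℕ) :
    (A ^ m).toBlocks₁₁ = (B ^ m).toBlocks₁₁ := by
  suffices h : ∀ m, (A ^ m).toBlocks₁₁ = (B ^ m).toBlocks₁₁ ∧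
      ∀ k, (A ^ m).toBlocks₁₂ * A.toBlocks₂₂ ^ k * A.toBlocks₂₁ =
        (B ^ m).toBlocks₁₂ * B.toBlocks₂₂ ^ k * B.toBlocks₂₁ from (h m).1
  intro m
  induction m with
  | zero =>
    refine ⟨?_, fun k => ?_⟩ <;> rw [pow_zero, pow_zero, ← fromBlocks_one, ← fromBlocks_one]
    · rfl
    · simp only [toBlocks_fromBlocks₁₂, Matrix.zero_mul]
  | succ m ih =>
    obtain ⟨ih₁₁, ih₁₂⟩ := ih
    refine ⟨?_, fun k => ?_⟩
    · have h0 := ih₁₂ 0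
      simp only [pow_zero, Matrix.mul_one] at h0
      rw [pow_succ, pow_succ, toBlocks₁₁_mul, toBlocks₁₁_mul, ih₁₁, h11, h0]
    · rw [toBlocks₁₂_pow_succ_mul_pow_mul, toBlocks₁₂_pow_succ_mul_pow_mul, ih₁₁, hmom, ih₁₂]

lemma Matrix.hasSum_exp_apply {m : Type*} [Fintype m] [DecidableEq m] (A : Matrix m m ℂ)
    (i j : m) :
    HasSum (fun n => (n.factorial⁻¹ : ℂ) * (A ^ n) i j) (NormedSpace.exp A i j) := by
  exact Pi.hasSum.mp (Pi.hasSum.mp (NormedSpace.exp_series_hasSum_exp' (𝕂 := ℂ) A) i) j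

lemma Matrix.toBlocks₁₁_exp_eq {α β γ : Type*} [Fintype α] [Fintype β] [Fintype γ]
    [DecidableEq α] [DecidableEq β] [DecidableEq γ]
    {A : Matrix (α ⊕ β) (α ⊕ β) ℂ} {B : Matrix (α ⊕ γ) (α ⊕ γ) ℂ}
    (hpow : ∀ n, (A ^ n).toBlocks₁₁ = (B ^ n).toBlocks₁₁) :
    (NormedSpace.exp A).toBlocks₁₁ = (NormedSpace.exp B).toBlocks₁₁ := by
  ext i j
  have hAB : ∀ n, (A ^ n) (.inl i) (.inl j) = (B ^ n) (.inl i) (.inl j) :=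
    fun n => congrFun (congrFun (hpow n) i) j
  change NormedSpace.exp A (.inl i) (.inl j) = NormedSpace.exp B (.inl i) (.inl j)
  refine (hasSum_exp_apply A _ _).unique ?_
  simpa only [hAB] using hasSum_exp_apply B (.inl i) (.inl j)

lemma Matrix.sum_norm_sq_col_eq_one {m : Type*} [Fintype m] [DecidableEq m] {U : Matrix m m ℂ}
    (hU : Uᴴ * U = 1) (j : m) : ∑ i, ‖U i j‖ ^ 2 = 1 := by
  have h := congrFun (congrFun hU j) j
  simp only [mul_apply, conjTranspose_apply, one_apply_eq,
    RCLike.star_def, Complex.conj_mul'] at h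
  exact_mod_cast h

lemma Matrix.mulVec_single_inl_eq_of_toBlocks₁₁_eq {α β γ : Type*} [Fintype α] [Fintype β]
    [Fintype γ] [DecidableEq α] [DecidableEq β] [DecidableEq γ]
    {U : Matrix (α ⊕ β) (α ⊕ β) ℂ} {V : Matrix (α ⊕ γ) (α ⊕ γ) ℂ} (hV : Vᴴ * V = 1)
    (hUV : U.toBlocks₁₁ = V.toBlocks₁₁) {u v : α} {g : ℂ} (hg : ‖g‖ = 1)
    (h : U *ᵥ Pi.single (.inl u) 1 = g • Pi.single (.inl v) 1) :
    V *ᵥ Pi.single (.inl u) 1 = g • Pi.single (.inl v) 1 := by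
  have hinl : ∀ i, V (.inl i) (.inl u) = g • (Pi.single v 1 : α → ℂ) i := fun i => by
    have hi := congrFun h (.inl i)
    have hUVi : U (.inl i) (.inl u) = V (.inl i) (.inl u) := congrFun (congrFun hUV i) u
    rw [← hUVi]
    simpa [mulVec_single_one, Pi.single_apply] using hi
  have hinr : ∀ k, V (.inr k) (.inl u) = 0 := by
    have hsum := sum_norm_sq_col_eq_one hV (.inl u)
    simpa [Fintype.sum_sum_type, hinl, Pi.single_apply, apply_ite, hg,
      Finset.sum_eq_zero_iff_of_nonneg] using hsum
  ext (i | k)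
  · simpa [mulVec_single_one, Pi.single_apply] using hinl i
  · simpa [mulVec_single_one] using hinr k

lemma Matrix.IsHermitian.conjTranspose_exp_mul_exp {n : Type*} [Fintype n] [DecidableEq n]
    {A : Matrix n n ℂ} (hA : A.IsHermitian) (t : ℝ) :
    (NormedSpace.exp ((-(Complex.I * t)) • A))ᴴ * NormedSpace.exp ((-(Complex.I * t)) • A) =
      1 := by
  have hskew : ((-(Complex.I * t)) • A)ᴴ = -((-(Complex.I * t)) • A) := by
    rw [conjTranspose_smul, hA.eq, ← neg_smul]
    simp
  set M := (-(Complex.I * t)) • A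
  rw [← exp_conjTranspose, hskew, ← exp_add_of_commute _ _ (Commute.refl M).neg_left,
    neg_add_cancel, NormedSpace.exp_zero]

theorem stmt_18 (s b c : ℕ)
    (A : Matrix (Fin s ⊕ Fin b) (Fin s ⊕ Fin b) ℂ)
    (B : Matrix (Fin s ⊕ Fin c) (Fin s ⊕ Fin c) ℂ)
    (hA : A.IsHermitian) (hB : B.IsHermitian)
    -- the isospectral reductions agree (as rational functions: on all non-real `λ`)
    (heq : ∀ lam : ℂ, lam.im ≠ 0 → red lam A = red lam B) :
    (∀ t : ℝ,
      (NormedSpace.exp ((-(Complex.I * t)) • A)).toBlocks₁₁ =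
        (NormedSpace.exp ((-(Complex.I * t)) • B)).toBlocks₁₁) ∧
    -- in particular, perfect state transfer happens in `A` iff it happens in `B`
    (∀ (τ : ℝ) (u v : Fin s),
      (∃ γ : ℂ, ‖γ‖ = 1 ∧
        (NormedSpace.exp ((-(Complex.I * τ)) • A)).mulVec
            (Pi.single (Sum.inl u) 1 : (Fin s ⊕ Fin b) → ℂ) =
          γ • (Pi.single (Sum.inl v) 1 : (Fin s ⊕ Fin b) → ℂ)) ↔
      (∃ γ : ℂ, ‖γ‖ = 1 ∧
        (NormedSpace.exp ((-(Complex.I * τ)) • B)).mulVec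
            (Pi.single (Sum.inl u) 1 : (Fin s ⊕ Fin c) → ℂ) =
          γ • (Pi.single (Sum.inl v) 1 : (Fin s ⊕ Fin c) → ℂ))) := by
  obtain ⟨h11, hmom⟩ := moments_eq_of_red_eq heq
  have hexp : ∀ t : ℝ, (NormedSpace.exp ((-(Complex.I * t)) • A)).toBlocks₁₁ =
      (NormedSpace.exp ((-(Complex.I * t)) • B)).toBlocks₁₁ := fun t =>
    toBlocks₁₁_exp_eq fun n => by
      rw [smul_pow, smul_pow]
      exact congrArg ((-(Complex.I * t)) ^ n • ·) (toBlocks₁₁_pow_eq h11 hmom n)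
  refine ⟨hexp, fun τ u v => ⟨?_, ?_⟩⟩
  · rintro ⟨γ, hγ, hAτ⟩
    exact ⟨γ, hγ, mulVec_single_inl_eq_of_toBlocks₁₁_eq
      (hB.conjTranspose_exp_mul_exp τ) (hexp τ) hγ hAτ⟩
  · rintro ⟨γ, hγ, hBτ⟩
    exact ⟨γ, hγ, mulVec_single_inl_eq_of_toBlocks₁₁_eq
      (hA.conjTranspose_exp_mul_exp τ) (hexp τ).symm hγ hBτ⟩
end
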